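/- arXiv:2012.15653 — 5 statements merged into one kernel-verified Lean document; each statement's English description precedes it below -/
import Mathlib

section
/- Let x : ℝ≥0 → Â(X) be the solution of the formal linear ODE x'(t) = x(t)·a(t) with x(0) = 1, where a(t) = ∑_{i∈I} a_i(t) X_i with a_i ∈ L¹. Then for every t ≥ 0, x(t) = ∑_{σ ∈ I*} (∫_0^t a_σ) X_σ, where for a word σ = (σ_1,…,σ_n), ∫_0^t a_σ := ∫_{0<τ_1<⋯<τ_n<t} a_{σ_1}(τ_1)⋯a_{σ_n}(τ_n) dτ and X_σ = X_{σ_1}⋯X_{σ_n}. -/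
open MeasureTheory

noncomputable section

variable {𝕜 : Type*} [RCLike 𝕜] {q : ℕ}

/-- Iterated integral `∫_0^t a_σ = ∫_{0<τ₁<⋯<τₙ<t} a_{σ₁}(τ₁)⋯a_{σₙ}(τₙ) dτ`,
where the word `σ` is given with its *last* letter first (so that the recursion
integrates over the outermost variable `τₙ`). -/
def iterInt (a : Fin q → ℝ → 𝕜) : List (Fin q) → ℝ → 𝕜
  | [], _ => 1
  | i :: w, t => ∫ τ in Set.Ioc (0 : ℝ) t, iterInt a w τ * a i τ

/-- Chen–Fliess expansion for the formal linear ODE `x'(t) = x(t)·a(t)`, `x(0) = 1`,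
with `a(t) = ∑ᵢ aᵢ(t) Xᵢ`, `aᵢ ∈ L¹`: the formal power series solution `x(t)`,
represented by its coefficients `x t w` on words `w`, defined degree-wise by the
integral recursion, is given by `⟨x(t), X_σ⟩ = ∫_0^t a_σ` for every word `σ`. -/
theorem stmt6 (a : Fin q → ℝ → 𝕜) (ha : ∀ i, IntegrableOn (a i) (Set.Ioi (0 : ℝ)))
    (x : ℝ → List (Fin q) → 𝕜)
    (hcont : ∀ w, ContinuousOn (fun t => x t w) (Set.Ici (0 : ℝ)))
    (hinit : ∀ w, x 0 w = if w = [] then 1 else 0)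
    (hconst : ∀ t, 0 ≤ t → x t [] = 1)
    (hode : ∀ (w : List (Fin q)) (i : Fin q), ∀ t, 0 ≤ t →
      x t (w ++ [i]) = x 0 (w ++ [i]) + ∫ τ in Set.Ioc (0 : ℝ) t, x τ w * a i τ) :
    ∀ t, 0 ≤ t → ∀ w : List (Fin q), x t w = iterInt a w.reverse t := by
  intro t ht w
  induction w using List.reverseRecOn generalizing t with
  | nil => simp [iterInt, hconst t ht]
  | append_singleton u i ih =>
    rw [hode u i t ht, hinit, if_neg (by simp), zero_add]
    simp only [List.reverse_append, List.reverse_singleton, List.singleton_append, iterInt]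
    refine setIntegral_congr_fun measurableSet_Ioc fun τ hτ => ?_
    rw [ih τ hτ.1.le]
end
end

section
/- For the planar vector fields f_0(x) = e_1 and f_1(x) = (1/(1−x_1)) e_2, every iterated Lie bracket of f_0 and f_1 involving f_1 at least twice vanishes identically on the unit ball, and for every k ∈ ℕ, the iterated bracket ad_{f_0}^k(f_1)(x) = (k!/(1−x_1)^{k+1}) e_2. In particular the C⁰ norm of ad_{f_0}^k(f_1) on any ball of radius δ < 1 grows like k!/(1−δ)^{k+1}, showing the factorial growth in bracket estimates for analytic vector fields is optimal. -/
noncomputable section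
open Set

/-- Lie bracket of planar vector fields: `[f,g] = (f·∇)g − (g·∇)f`. -/
def lieB (f g : ℝ × ℝ → ℝ × ℝ) : ℝ × ℝ → ℝ × ℝ :=
  fun x => fderiv ℝ g x (f x) - fderiv ℝ f x (g x)

/-- `f₀(x) = e₁`. -/
def f₀ : ℝ × ℝ → ℝ × ℝ := fun _ => (1, 0)

/-- `f₁(x) = (1/(1−x₁)) e₂`. -/
def f₁ : ℝ × ℝ → ℝ × ℝ := fun x => (0, (1 - x.1)⁻¹)

/-- Iterated bracket `ad_{f₀}^k (f₁)`. -/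
def adIter : ℕ → ℝ × ℝ → ℝ × ℝ
  | 0 => f₁
  | k + 1 => lieB f₀ (adIter k)

/-- Formal brackets of the two symbols `X₀`, `X₁`. -/
inductive FB2 where
  | X0 : FB2
  | X1 : FB2
  | br : FB2 → FB2 → FB2

/-- Number of occurrences of `X₁` in a formal bracket. -/
def FB2.n1 : FB2 → ℕ
  | .X0 => 0
  | .X1 => 1
  | .br a b => a.n1 + b.n1

/-- Evaluation of a formal bracket on the vector fields `f₀`, `f₁`. -/
def FB2.eval : FB2 → ℝ × ℝ → ℝ × ℝ
  | .X0 => f₀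
  | .X1 => f₁
  | .br a b => lieB a.eval b.eval

def U : Set (ℝ × ℝ) := {x | x.1 ≠ 1}

lemma isOpen_U : IsOpen U := isOpen_compl_singleton.preimage continuous_fst

def G (c : ℝ) (m : ℕ) : ℝ × ℝ → ℝ × ℝ := fun x => (0, c / (1 - x.1) ^ m)

lemma hasDerivAt_phi (c : ℝ) (m : ℕ) {t : ℝ} (ht : t ≠ 1) :
    HasDerivAt (fun t : ℝ => c / (1 - t) ^ m) (c * m / (1 - t) ^ (m + 1)) t := by
  have h1 : (1 - t) ≠ 0 := sub_ne_zero.mpr (Ne.symm ht)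
  have h : HasDerivAt (fun s : ℝ => (1 - s)) (-1) t := by
    simpa using (hasDerivAt_id t).const_sub 1
  have hp : HasDerivAt (fun s : ℝ => (1 - s) ^ m) ((m : ℝ) * (1 - t) ^ (m - 1) * (-1)) t :=
    h.pow m
  have hinv := (hp.inv (pow_ne_zero m h1)).const_mul c
  refine (hinv.congr_of_eventuallyEq (Filter.Eventually.of_forall fun y => ?_)).congr_deriv ?_
  · simp [div_eq_mul_inv]
  cases m with
  | zero => simp
  | succ n =>
    simp only [Nat.add_sub_cancel]
    field_simp
    ring_nf

/-- The derivative of `G c m` at `x` with `x.1 ≠ 1`. -/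
def D (c : ℝ) (m : ℕ) (x : ℝ × ℝ) : (ℝ × ℝ) →L[ℝ] (ℝ × ℝ) :=
  ContinuousLinearMap.prod 0
    ((c * m / (1 - x.1) ^ (m + 1)) • ContinuousLinearMap.fst ℝ ℝ ℝ)

lemma D_apply (c : ℝ) (m : ℕ) (x v : ℝ × ℝ) :
    D c m x v = (0, c * m / (1 - x.1) ^ (m + 1) * v.1) := rfl

lemma hasFDerivAt_G (c : ℝ) (m : ℕ) {x : ℝ × ℝ} (hx : x.1 ≠ 1) :
    HasFDerivAt (G c m) (D c m x) x := by
  have h1 : HasFDerivAt (fun y : ℝ × ℝ => c / (1 - y.1) ^ m)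
      ((c * m / (1 - x.1) ^ (m + 1)) • ContinuousLinearMap.fst ℝ ℝ ℝ) x :=
    (hasDerivAt_phi c m hx).comp_hasFDerivAt x (hasFDerivAt_fst)
  exact HasFDerivAt.prodMk (hasFDerivAt_const (0 : ℝ) x) h1

lemma fderiv_G (c : ℝ) (m : ℕ) {x : ℝ × ℝ} (hx : x.1 ≠ 1) :
    fderiv ℝ (G c m) x = D c m x := (hasFDerivAt_G c m hx).fderiv

lemma fderiv_congr_U {F H : ℝ × ℝ → ℝ × ℝ} (h : EqOn F H U) {x : ℝ × ℝ} (hx : x ∈ U) :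
    fderiv ℝ F x = fderiv ℝ H x :=
  (Filter.eventuallyEq_of_mem (isOpen_U.mem_nhds hx) h).fderiv_eq

lemma fderiv_f₀ (x : ℝ × ℝ) : fderiv ℝ f₀ x = 0 := fderiv_const_apply _

lemma lieB_f0_G {F : ℝ × ℝ → ℝ × ℝ} {c : ℝ} {m : ℕ} (h : EqOn F (G c m) U) :
    EqOn (lieB f₀ F) (G (c * m) (m + 1)) U := by
  intro x hx
  have hx1 : x.1 ≠ 1 := hx
  simp only [lieB, fderiv_congr_U h hx, fderiv_G c m hx1, fderiv_f₀, D_apply,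
    ContinuousLinearMap.zero_apply, sub_zero, f₀, G, mul_one]

lemma lieB_G_f0 {F : ℝ × ℝ → ℝ × ℝ} {c : ℝ} {m : ℕ} (h : EqOn F (G c m) U) :
    EqOn (lieB F f₀) (G (-(c * m)) (m + 1)) U := by
  intro x hx
  have hx1 : x.1 ≠ 1 := hx
  simp only [lieB, fderiv_congr_U h hx, fderiv_G c m hx1, fderiv_f₀, D_apply,
    ContinuousLinearMap.zero_apply, zero_sub, f₀, G, mul_one, Prod.neg_mk, neg_zero, neg_div]

lemma lieB_G_G {F F' : ℝ × ℝ → ℝ × ℝ} {c c' : ℝ} {m m' : ℕ}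
    (h : EqOn F (G c m) U) (h' : EqOn F' (G c' m') U) :
    EqOn (lieB F F') 0 U := by
  intro x hx
  have hx1 : x.1 ≠ 1 := hx
  simp only [lieB, fderiv_congr_U h hx, fderiv_congr_U h' hx, fderiv_G c m hx1,
    fderiv_G c' m' hx1, h hx, h' hx, D_apply, G, mul_zero, sub_zero, Pi.zero_apply,
    Prod.mk_eq_zero, sub_self, and_self]

lemma lieB_f0_f0 : lieB f₀ f₀ = 0 := by
  funext x
  simp [lieB, fderiv_f₀]

lemma f₁_eq_G : f₁ = G 1 1 := by
  funext x; simp [f₁, G, one_div]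

lemma adIter_eqOn (k : ℕ) : EqOn (adIter k) (G (k.factorial : ℝ) (k + 1)) U := by
  induction k with
  | zero => rw [show adIter 0 = f₁ from rfl, f₁_eq_G]; simp; exact fun x hx => rfl
  | succ n ih =>
    have := lieB_f0_G ih
    have hc : ((n.factorial : ℝ)) * ((n:ℝ) + 1) = ((n + 1).factorial : ℝ) := by
      rw [Nat.factorial_succ]; push_cast; ring
    rw [show adIter (n+1) = lieB f₀ (adIter n) from rfl]
    simpa [hc] using this

lemma FB2_classify (b : FB2) :
    (b.eval = f₀ ∧ b.n1 = 0) ∨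
      ∃ c : ℝ, ∃ m : ℕ, EqOn b.eval (G c m) U ∧ (2 ≤ b.n1 → c = 0) := by
  induction b with
  | X0 => exact Or.inl ⟨rfl, rfl⟩
  | X1 =>
    refine Or.inr ⟨1, 1, ?_, by simp [FB2.n1]⟩
    rw [show FB2.X1.eval = f₁ from rfl, f₁_eq_G]; exact fun x hx => rfl
  | br a b iha ihb =>
    rw [show (FB2.br a b).eval = lieB a.eval b.eval from rfl]
    rcases iha with ⟨ha, hna⟩ | ⟨c, m, ha, hca⟩
    · rcases ihb with ⟨hb, hnb⟩ | ⟨c', m', hb, hcb⟩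
      · refine Or.inr ⟨0, 1, ?_, fun _ => rfl⟩
        rw [ha, hb, lieB_f0_f0]
        intro x hx; simp [G, Prod.mk_zero_zero]
      · rw [ha]
        refine Or.inr ⟨c' * m', m' + 1, lieB_f0_G hb, fun h2 => ?_⟩
        have : 2 ≤ b.n1 := by
          have := hna; simp [FB2.n1] at h2; omega
        rw [hcb this, zero_mul]
    · rcases ihb with ⟨hb, hnb⟩ | ⟨c', m', hb, hcb⟩
      · rw [hb]
        refine Or.inr ⟨-(c * m), m + 1, lieB_G_f0 ha, fun h2 => ?_⟩
        have : 2 ≤ a.n1 := by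
          have := hnb; simp [FB2.n1] at h2; omega
        rw [hca this, zero_mul, neg_zero]
      · refine Or.inr ⟨0, 1, ?_, fun _ => rfl⟩
        intro x hx
        have := lieB_G_G ha hb hx
        simpa [G, Prod.mk_zero_zero] using this

lemma mem_U_of_norm_lt {x : ℝ × ℝ} (hx : ‖x‖ < 1) : x ∈ U := by
  intro h1
  have : ‖x.1‖ ≤ ‖x‖ := norm_fst_le x
  rw [h1] at this
  simp at this
  linarith


/-- For `f₀(x) = e₁` and `f₁(x) = (1/(1−x₁)) e₂` on the unit ball of `ℝ²`:
every iterated Lie bracket involving `f₁` at least twice vanishes identically,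
`ad_{f₀}^k(f₁)(x) = (k!/(1−x₁)^{k+1}) e₂` for every `k`, and the `C⁰` norm of
`ad_{f₀}^k(f₁)` on the ball of radius `δ < 1` equals `k!/(1−δ)^{k+1}`
(factorial growth in `k` is attained). -/
theorem stmt8 :
    (∀ b : FB2, 2 ≤ b.n1 → ∀ x : ℝ × ℝ, ‖x‖ < 1 → b.eval x = 0) ∧
    (∀ (k : ℕ) (x : ℝ × ℝ), ‖x‖ < 1 →
      adIter k x = (0, (k.factorial : ℝ) / (1 - x.1) ^ (k + 1))) ∧
    (∀ δ : ℝ, 0 < δ → δ < 1 → ∀ k : ℕ,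
      (⨆ x ∈ Metric.closedBall (0 : ℝ × ℝ) δ, ‖adIter k x‖)
        = (k.factorial : ℝ) / (1 - δ) ^ (k + 1)) := by
  have hAd : ∀ (k : ℕ) (x : ℝ × ℝ), ‖x‖ < 1 →
      adIter k x = (0, (k.factorial : ℝ) / (1 - x.1) ^ (k + 1)) := by
    intro k x hx
    exact adIter_eqOn k (mem_U_of_norm_lt hx)
  refine ⟨?_, hAd, ?_⟩
  · intro b hb x hx
    rcases FB2_classify b with ⟨_, hn⟩ | ⟨c, m, h, hc⟩
    · omega
    · rw [hc hb] at h
      have := h (mem_U_of_norm_lt hx)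
      simpa [G, Prod.mk_zero_zero] using this
  · intro δ hδ0 hδ1 k
    have h1δ : (0:ℝ) < 1 - δ := by linarith
    have hfac : (0:ℝ) < (k.factorial : ℝ) := by positivity
    have hBpos : (0:ℝ) < (k.factorial : ℝ) / (1 - δ) ^ (k + 1) :=
      div_pos hfac (pow_pos h1δ _)
    have key : ∀ x ∈ Metric.closedBall (0 : ℝ × ℝ) δ,
        ‖adIter k x‖ ≤ (k.factorial : ℝ) / (1 - δ) ^ (k + 1) := by
      intro x hxS
      have hxn : ‖x‖ ≤ δ := by simpa [Metric.mem_closedBall, dist_zero_right] using hxS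
      have hx1 : ‖x‖ < 1 := lt_of_le_of_lt hxn hδ1
      have hx1' : x.1 ≤ δ := le_trans (le_trans (le_abs_self _) (norm_fst_le x)) hxn
      have hpos : (0:ℝ) < 1 - x.1 := by linarith
      rw [hAd k x hx1]
      have hval : ‖((0:ℝ), (k.factorial : ℝ) / (1 - x.1) ^ (k + 1))‖
          = (k.factorial : ℝ) / (1 - x.1) ^ (k + 1) := by
        simp only [Prod.norm_def, norm_zero, Real.norm_eq_abs, abs_div, abs_pow,
          Nat.abs_cast, abs_of_pos hpos]
        exact sup_eq_right.mpr (by positivity)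
      rw [hval]
      gcongr <;> linarith
    have hmem : ((δ, 0) : ℝ × ℝ) ∈ Metric.closedBall (0 : ℝ × ℝ) δ := by
      simp [Metric.mem_closedBall, dist_zero_right, Prod.norm_def, abs_of_pos hδ0, hδ0.le]
    have hδn : ‖((δ, 0) : ℝ × ℝ)‖ < 1 := by
      simp [Prod.norm_def, abs_of_pos hδ0]; linarith
    have hval : ‖adIter k ((δ, 0) : ℝ × ℝ)‖ = (k.factorial : ℝ) / (1 - δ) ^ (k + 1) := by
      rw [hAd k _ hδn]
      simp only [Prod.norm_def, norm_zero, Real.norm_eq_abs, abs_div, abs_pow,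
        Nat.abs_cast, abs_of_pos h1δ]
      exact sup_eq_right.mpr (by positivity)
    have hbdd : BddAbove (Set.range fun x : ℝ × ℝ =>
        ⨆ _ : x ∈ Metric.closedBall (0 : ℝ × ℝ) δ, ‖adIter k x‖) := by
      refine ⟨(k.factorial : ℝ) / (1 - δ) ^ (k + 1), ?_⟩
      rintro y ⟨x, rfl⟩
      exact Real.iSup_le (fun hxS => key x hxS) hBpos.le
    refine le_antisymm ?_ ?_
    · refine Real.iSup_le (fun x => ?_) hBpos.le
      exact Real.iSup_le (fun hxS => key x hxS) hBpos.le
    · refine le_trans ?_ (le_ciSup hbdd ((δ, 0) : ℝ × ℝ))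
      rw [ciSup_pos hmem, hval]
end
end

section
/- Let T > 0 and A ∈ L¹((0,T); M_d(K)). For each t ∈ [0,T] and p ∈ K^d, the solution of x'(t) = A(t)x(t), x(0) = p satisfies x(t) = p + ∑_{j=1}^∞ ∫_{0<τ_1<⋯<τ_j<t} A(τ_j)⋯A(τ_1) p dτ, where the series converges absolutely; moreover the M-th remainder is bounded by (‖A‖_{L¹(0,t)}^M / M!) |p| e^{‖A‖_{L¹(0,t)}}. -/
open MeasureTheory

noncomputable section

/-- `d × d` matrices over `ℝ`, as continuous linear endomorphisms of `ℝ^d`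
(a submultiplicative norm). -/
abbrev Mt (d : ℕ) := (Fin d → ℝ) →L[ℝ] (Fin d → ℝ)

/-- The `j`-th term of the iterated Duhamel (Chen–Fliess) series:
`T₀(t) = p`, `T_{j+1}(t) = ∫_0^t A(τ) T_j(τ) dτ`, so that
`T_j(t) = ∫_{0<τ₁<⋯<τ_j<t} A(τ_j)⋯A(τ₁) p dτ`. -/
def picardIter {d : ℕ} (A : ℝ → Mt d) (p : Fin d → ℝ) : ℕ → ℝ → Fin d → ℝ
  | 0, _ => p
  | j + 1, t => ∫ τ in Set.Ioc (0 : ℝ) t, A τ (picardIter A p j τ)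

lemma aux_geom {a b : ℝ} (hb : 0 ≤ b) (hab : b ≤ a) (j : ℕ) :
    ((j:ℝ)+1) * ((a - b) * b ^ j) ≤ a ^ (j+1) - b ^ (j+1) := by
  have h := geom_sum₂_mul a b (j+1)
  simp only [Nat.add_sub_cancel] at h
  rw [← h]
  have key : ((j:ℝ)+1) * b ^ j ≤ ∑ i ∈ Finset.range (j+1), a ^ i * b ^ (j - i) := by
    have h1 : ((j:ℝ)+1) * b ^ j = ∑ _i ∈ Finset.range (j+1), b ^ j := by
      rw [Finset.sum_const, Finset.card_range, nsmul_eq_mul]; push_cast; ring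
    rw [h1]
    apply Finset.sum_le_sum
    intro i hi
    simp only [Finset.mem_range] at hi
    have hij : i ≤ j := Nat.lt_succ_iff.mp hi
    have h2 : b ^ j = b ^ i * b ^ (j - i) := by rw [← pow_add]; congr 1; omega
    rw [h2]
    exact mul_le_mul_of_nonneg_right (pow_le_pow_left₀ hb hab i) (pow_nonneg hb _)
  have hab' : 0 ≤ a - b := sub_nonneg.mpr hab
  nlinarith [key, hab']

lemma aux_step {a b : ℝ} (hb : 0 ≤ b) (hab : b ≤ a) (j : ℕ) :
    (a - b) * a ^ j ≤ (a ^ (j+1) - b ^ (j+1)) / ((j:ℝ)+1) + (a - b) * (a ^ j - b ^ j) := by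
  have h := aux_geom hb hab j
  have hj : (0:ℝ) < (j:ℝ)+1 := by positivity
  have h2 : (a - b) * b ^ j ≤ (a ^ (j+1) - b ^ (j+1)) / ((j:ℝ)+1) := by
    rw [le_div_iff₀ hj]; linarith
  linarith

lemma aux_sum (c : ℝ) (hc : 0 ≤ c) (j n : ℕ) (hn : 1 ≤ n) :
    ∑ i ∈ Finset.range n, (c/n) * (((i:ℝ)+1) * c / n) ^ j
      ≤ c^(j+1)/((j:ℝ)+1) + c^(j+1)/n := by
  have hn0 : (0:ℝ) < n := by exact_mod_cast hn
  set v : ℕ → ℝ := fun i => (i:ℝ) * c / n with hv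
  have hvd : ∀ i : ℕ, v (i+1) - v i = c / n := by
    intro i; simp only [hv]; push_cast; ring
  have hvmono : ∀ i : ℕ, v i ≤ v (i+1) := by
    intro i
    have := hvd i
    have : 0 ≤ c / n := by positivity
    nlinarith [hvd i]
  have hvnn : ∀ i : ℕ, 0 ≤ v i := by
    intro i; simp only [hv]; positivity
  have hterm : ∀ i ∈ Finset.range n,
      (c/n) * (((i:ℝ)+1) * c / n) ^ j
        ≤ (v (i+1) ^ (j+1) - v i ^ (j+1)) / ((j:ℝ)+1)
          + (c/n) * (v (i+1) ^ j - v i ^ j) := by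
    intro i _
    have h1 : ((i:ℝ)+1) * c / n = v (i+1) := by simp only [hv]; push_cast; ring
    rw [h1, ← hvd i]
    exact aux_step (hvnn i) (hvmono i) j
  calc ∑ i ∈ Finset.range n, (c/n) * (((i:ℝ)+1) * c / n) ^ j
      ≤ ∑ i ∈ Finset.range n, ((v (i+1) ^ (j+1) - v i ^ (j+1)) / ((j:ℝ)+1)
          + (c/n) * (v (i+1) ^ j - v i ^ j)) := Finset.sum_le_sum hterm
    _ = (v n ^ (j+1) - v 0 ^ (j+1)) / ((j:ℝ)+1) + (c/n) * (v n ^ j - v 0 ^ j) := by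
        rw [Finset.sum_add_distrib, ← Finset.sum_div,
          Finset.sum_range_sub (fun i => v i ^ (j+1)), ← Finset.mul_sum,
          Finset.sum_range_sub (fun i => v i ^ j)]
    _ ≤ c^(j+1)/((j:ℝ)+1) + c^(j+1)/n := by
        have hvn : v n = c := by simp only [hv]; field_simp
        have hv0 : v 0 = 0 := by simp [hv]
        rw [hvn, hv0]
        have h0 : (0:ℝ) ^ (j+1) = 0 := by simp
        rw [h0, sub_zero]
        have h2 : (c/n) * (c^j - (0:ℝ)^j) ≤ c^(j+1)/n := by
          rcases Nat.eq_zero_or_pos j with hj | hj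
          · subst hj; simp; positivity
          · rw [zero_pow hj.ne', sub_zero, pow_succ]
            ring_nf; rfl
        linarith

lemma integral_Ioc_partition {E : Type*} [NormedAddCommGroup E] [NormedSpace ℝ E]
    (F : ℝ → E) (s : ℕ → ℝ) (n : ℕ) (hmono : ∀ i, i < n → s i ≤ s (i+1))
    (hint : IntegrableOn F (Set.Ioc (s 0) (s n))) :
    ∫ τ in Set.Ioc (s 0) (s n), F τ
      = ∑ i ∈ Finset.range n, ∫ τ in Set.Ioc (s i) (s (i+1)), F τ := by
  induction n with
  | zero => simp
  | succ n ih =>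
    have hchain : ∀ m, m ≤ n → s 0 ≤ s m := by
      intro m hm
      induction m with
      | zero => exact le_refl _
      | succ m ihm =>
        exact le_trans (ihm (by omega)) (hmono m (by omega))
    have h0n : s 0 ≤ s n := hchain n le_rfl
    have hnn : s n ≤ s (n+1) := hmono n (by omega)
    have hun : Set.Ioc (s 0) (s n) ∪ Set.Ioc (s n) (s (n+1)) = Set.Ioc (s 0) (s (n+1)) :=
      Set.Ioc_union_Ioc_eq_Ioc h0n hnn
    have hint1 : IntegrableOn F (Set.Ioc (s 0) (s n)) :=
      hint.mono_set (by rw [← hun]; exact Set.subset_union_left)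
    have hint2 : IntegrableOn F (Set.Ioc (s n) (s (n+1))) :=
      hint.mono_set (by rw [← hun]; exact Set.subset_union_right)
    rw [Finset.sum_range_succ, ← ih (fun i hi => hmono i (by omega)) hint1, ← hun,
      setIntegral_union (Set.Ioc_disjoint_Ioc_of_le le_rfl) measurableSet_Ioc hint1 hint2]

lemma key_ineq (f : ℝ → ℝ) (t : ℝ) (ht : 0 ≤ t)
    (hf : IntegrableOn f (Set.Ioc 0 t)) (hf0 : ∀ τ, 0 ≤ f τ) (j : ℕ) :
    ∫ τ in Set.Ioc 0 t, f τ * (∫ σ in Set.Ioc 0 τ, f σ) ^ j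
      ≤ (∫ τ in Set.Ioc 0 t, f τ) ^ (j+1) / ((j:ℝ)+1) := by
  set g : ℝ → ℝ := fun s => ∫ σ in Set.Ioc 0 s, f σ with hg
  have hg0 : g 0 = 0 := by simp [hg]
  have hfIcc : IntegrableOn f (Set.Icc 0 t) :=
    (integrableOn_Icc_iff_integrableOn_Ioc).mpr hf
  have hgc : ContinuousOn g (Set.Icc 0 t) :=
    intervalIntegral.continuousOn_primitive hfIcc
  have hsplit : ∀ a b : ℝ, 0 ≤ a → a ≤ b → b ≤ t →
      g b = g a + ∫ σ in Set.Ioc a b, f σ := by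
    intro a b ha hab hbt
    have hu : Set.Ioc 0 a ∪ Set.Ioc a b = Set.Ioc 0 b := Set.Ioc_union_Ioc_eq_Ioc ha hab
    have h1 : IntegrableOn f (Set.Ioc 0 a) :=
      hf.mono_set (Set.Ioc_subset_Ioc le_rfl (le_trans hab hbt))
    have h2 : IntegrableOn f (Set.Ioc a b) := by
      apply hf.mono_set
      intro x hx
      exact ⟨lt_of_le_of_lt ha hx.1, le_trans hx.2 hbt⟩
    simp only [hg]
    rw [← hu, setIntegral_union (Set.Ioc_disjoint_Ioc_of_le le_rfl) measurableSet_Ioc h1 h2]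
  have hgmono : ∀ a b : ℝ, 0 ≤ a → a ≤ b → b ≤ t → g a ≤ g b := by
    intro a b ha hab hbt
    rw [hsplit a b ha hab hbt]
    have : 0 ≤ ∫ σ in Set.Ioc a b, f σ :=
      setIntegral_nonneg measurableSet_Ioc (fun x _ => hf0 x)
    linarith
  have hgnn : ∀ s, s ∈ Set.Icc 0 t → 0 ≤ g s := by
    intro s _
    exact setIntegral_nonneg measurableSet_Ioc (fun x _ => hf0 x)
  set c : ℝ := g t with hc
  have hcnn : 0 ≤ c := hgnn t ⟨ht, le_rfl⟩
  -- integrability of the integrand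
  have hmeas_gj : AEStronglyMeasurable (fun τ => g τ ^ j) (volume.restrict (Set.Ioc 0 t)) :=
    ((hgc.pow j).mono Set.Ioc_subset_Icc_self).aestronglyMeasurable measurableSet_Ioc
  have hbound : ∀ᵐ τ ∂(volume.restrict (Set.Ioc 0 t)),
      ‖f τ * g τ ^ j‖ ≤ f τ * c ^ j := by
    rw [ae_restrict_iff' measurableSet_Ioc]
    filter_upwards with τ hτ
    have h1 : 0 ≤ g τ := hgnn τ ⟨hτ.1.le, hτ.2⟩
    have h2 : g τ ≤ c := hgmono τ t hτ.1.le hτ.2 le_rfl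
    rw [Real.norm_eq_abs, abs_of_nonneg (mul_nonneg (hf0 τ) (pow_nonneg h1 j))]
    exact mul_le_mul_of_nonneg_left (pow_le_pow_left₀ h1 h2 j) (hf0 τ)
  have hFint : IntegrableOn (fun τ => f τ * g τ ^ j) (Set.Ioc 0 t) := by
    apply Integrable.mono' (hf.mul_const (c ^ j))
    · exact (hf.aestronglyMeasurable.mul hmeas_gj)
    · exact hbound
  -- crude bound used when c = 0
  have hcrude : ∫ τ in Set.Ioc 0 t, f τ * g τ ^ j ≤ c * c ^ j := by
    have h1 : ∫ τ in Set.Ioc 0 t, f τ * g τ ^ j ≤ ∫ τ in Set.Ioc 0 t, f τ * c ^ j := by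
      apply setIntegral_mono_on hFint (hf.mul_const _) measurableSet_Ioc
      intro τ hτ
      have h1 : 0 ≤ g τ := hgnn τ ⟨hτ.1.le, hτ.2⟩
      have h2 : g τ ≤ c := hgmono τ t hτ.1.le hτ.2 le_rfl
      exact mul_le_mul_of_nonneg_left (pow_le_pow_left₀ h1 h2 j) (hf0 τ)
    rw [MeasureTheory.integral_mul_const] at h1
    have hgt : (∫ τ in Set.Ioc 0 t, f τ) = c := rfl
    rw [hgt] at h1
    linarith [h1]
  rcases eq_or_lt_of_le hcnn with hc0 | hcpos
  · -- c = 0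
    calc ∫ τ in Set.Ioc 0 t, f τ * g τ ^ j ≤ c * c ^ j := hcrude
      _ ≤ c ^ (j+1) / ((j:ℝ)+1) := by
          rw [← hc0]
          simp
  · -- c > 0 : partition argument
    have hkey : ∀ n : ℕ, 1 ≤ n →
        ∫ τ in Set.Ioc 0 t, f τ * g τ ^ j ≤ c ^ (j+1) / ((j:ℝ)+1) + c ^ (j+1) / n := by
      intro n hn
      have hn0 : (0:ℝ) < n := by exact_mod_cast hn
      have hIVT : ∀ i : ℕ, ∃ y, y ∈ Set.Icc 0 t ∧ g y = min ((i:ℝ) * c / n) c := by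
        intro i
        have hmem : min ((i:ℝ) * c / n) c ∈ Set.Icc (g 0) (g t) := by
          rw [hg0, ← hc]
          constructor
          · exact le_min (div_nonneg (mul_nonneg (Nat.cast_nonneg i) hcnn) hn0.le) hcnn
          · exact min_le_right _ _
        obtain ⟨y, hy, hgy⟩ := intermediate_value_Icc ht hgc hmem
        exact ⟨y, hy, hgy⟩
      set s : ℕ → ℝ := fun i =>
        if i = 0 then 0 else if n ≤ i then t else Classical.choose (hIVT i) with hs
      have hsmem : ∀ i, s i ∈ Set.Icc 0 t := by
        intro i
        simp only [hs]
        split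
        · exact ⟨le_rfl, ht⟩
        split
        · exact ⟨ht, le_rfl⟩
        · exact (Classical.choose_spec (hIVT i)).1
      have hsval : ∀ i, i ≤ n → g (s i) = (i:ℝ) * c / n := by
        intro i hi
        simp only [hs]
        rcases eq_or_ne i 0 with h0 | h0
        · subst h0; simp [hg0]
        rcases eq_or_ne i n with hin | hin
        · subst hin
          rw [if_neg h0, if_pos le_rfl, ← hc]
          field_simp
        · have hilt : i < n := lt_of_le_of_ne hi hin
          rw [if_neg h0, if_neg (by omega)]
          rw [(Classical.choose_spec (hIVT i)).2]
          apply min_eq_left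
          rw [div_le_iff₀ hn0]
          nlinarith [hcnn, (show (i:ℝ) ≤ n by exact_mod_cast hi)]
      have hsmono : ∀ i, i < n → s i ≤ s (i+1) := by
        intro i hi
        by_contra hlt
        push_neg at hlt
        have h1 := hgmono (s (i+1)) (s i) (hsmem (i+1)).1 hlt.le (hsmem i).2
        rw [hsval i hi.le, hsval (i+1) hi] at h1
        push_cast at h1
        have h3 := mul_le_mul_of_nonneg_right h1 hn0.le
        rw [div_mul_cancel₀ _ hn0.ne', div_mul_cancel₀ _ hn0.ne'] at h3
        nlinarith
      have hs0 : s 0 = 0 := by simp [hs]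
      have hsn : s n = t := by
        simp only [hs]
        rw [if_neg (by omega), if_pos le_rfl]
      have hpart := integral_Ioc_partition (fun τ => f τ * g τ ^ j) s n hsmono
        (by rw [hs0, hsn]; exact hFint)
      rw [hs0, hsn] at hpart
      rw [hpart]
      have hpiece : ∀ i ∈ Finset.range n,
          ∫ τ in Set.Ioc (s i) (s (i+1)), f τ * g τ ^ j
            ≤ (c/n) * (((i:ℝ)+1) * c / n) ^ j := by
        intro i hi
        simp only [Finset.mem_range] at hi
        have hi1 : i + 1 ≤ n := hi
        have hmem0 := hsmem i
        have hmem1 := hsmem (i+1)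
        have hss := hsmono i hi
        have hsub : Set.Ioc (s i) (s (i+1)) ⊆ Set.Ioc 0 t := by
          intro x hx
          exact ⟨lt_of_le_of_lt hmem0.1 hx.1, le_trans hx.2 hmem1.2⟩
        have hint1 : IntegrableOn (fun τ => f τ * g τ ^ j) (Set.Ioc (s i) (s (i+1))) :=
          hFint.mono_set hsub
        have hint2 : IntegrableOn (fun τ => f τ * g (s (i+1)) ^ j) (Set.Ioc (s i) (s (i+1))) :=
          (hf.mono_set hsub).mul_const _
        have h1 : ∫ τ in Set.Ioc (s i) (s (i+1)), f τ * g τ ^ j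
            ≤ ∫ τ in Set.Ioc (s i) (s (i+1)), f τ * g (s (i+1)) ^ j := by
          apply setIntegral_mono_on hint1 hint2 measurableSet_Ioc
          intro τ hτ
          have hτI : τ ∈ Set.Icc 0 t := ⟨le_trans hmem0.1 hτ.1.le, le_trans hτ.2 hmem1.2⟩
          have h1 : 0 ≤ g τ := hgnn τ hτI
          have h2 : g τ ≤ g (s (i+1)) := hgmono τ _ hτI.1 hτ.2 hmem1.2
          exact mul_le_mul_of_nonneg_left (pow_le_pow_left₀ h1 h2 j) (hf0 τ)
        rw [MeasureTheory.integral_mul_const] at h1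
        have h2 : ∫ τ in Set.Ioc (s i) (s (i+1)), f τ = g (s (i+1)) - g (s i) := by
          have := hsplit (s i) (s (i+1)) hmem0.1 hss hmem1.2
          linarith
        rw [h2, hsval i hi.le, hsval (i+1) hi1] at h1
        push_cast at h1
        calc ∫ τ in Set.Ioc (s i) (s (i+1)), f τ * g τ ^ j
            ≤ (((i:ℝ)+1) * c / n - (i:ℝ) * c / n) * (((i:ℝ)+1) * c / n) ^ j := h1
          _ = (c/n) * (((i:ℝ)+1) * c / n) ^ j := by ring
      calc ∑ i ∈ Finset.range n, ∫ τ in Set.Ioc (s i) (s (i+1)), f τ * g τ ^ j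
          ≤ ∑ i ∈ Finset.range n, (c/n) * (((i:ℝ)+1) * c / n) ^ j :=
            Finset.sum_le_sum hpiece
        _ ≤ c ^ (j+1) / ((j:ℝ)+1) + c ^ (j+1) / n := aux_sum c hcnn j n hn
    have htend : Filter.Tendsto (fun n : ℕ => c ^ (j+1) / ((j:ℝ)+1) + c ^ (j+1) / n)
        Filter.atTop (nhds (c ^ (j+1) / ((j:ℝ)+1) + 0)) :=
      Filter.Tendsto.add tendsto_const_nhds (tendsto_const_div_atTop_nhds_zero_nat _)
    rw [add_zero] at htend
    exact ge_of_tendsto htend (Filter.eventually_atTop.mpr ⟨1, fun n hn => hkey n hn⟩)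

lemma gpow_integrable (f : ℝ → ℝ) (t : ℝ) (hf : IntegrableOn f (Set.Ioc 0 t))
    (hf0 : ∀ τ, 0 ≤ f τ) (j : ℕ) :
    IntegrableOn (fun τ => f τ * (∫ σ in Set.Ioc 0 τ, f σ) ^ j) (Set.Ioc 0 t) := by
  rcases le_or_gt 0 t with ht | ht
  swap
  · rw [Set.Ioc_eq_empty (by linarith)]
    simp [IntegrableOn]
  set g : ℝ → ℝ := fun s => ∫ σ in Set.Ioc 0 s, f σ with hg
  have hfIcc : IntegrableOn f (Set.Icc 0 t) :=
    (integrableOn_Icc_iff_integrableOn_Ioc).mpr hf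
  have hgc : ContinuousOn g (Set.Icc 0 t) :=
    intervalIntegral.continuousOn_primitive hfIcc
  have hgnn : ∀ s, s ∈ Set.Icc 0 t → 0 ≤ g s := by
    intro s _
    exact setIntegral_nonneg measurableSet_Ioc (fun x _ => hf0 x)
  have hgmono : ∀ a, a ∈ Set.Icc 0 t → g a ≤ g t := by
    intro a ha
    have hu : Set.Ioc 0 a ∪ Set.Ioc a t = Set.Ioc 0 t := Set.Ioc_union_Ioc_eq_Ioc ha.1 ha.2
    have h1 : IntegrableOn f (Set.Ioc 0 a) := hf.mono_set (Set.Ioc_subset_Ioc le_rfl ha.2)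
    have h2 : IntegrableOn f (Set.Ioc a t) := hf.mono_set (by
      intro x hx; exact ⟨lt_of_le_of_lt ha.1 hx.1, hx.2⟩)
    have : g t = g a + ∫ σ in Set.Ioc a t, f σ := by
      simp only [hg]
      rw [← hu, setIntegral_union (Set.Ioc_disjoint_Ioc_of_le le_rfl) measurableSet_Ioc h1 h2]
    have h3 : 0 ≤ ∫ σ in Set.Ioc a t, f σ :=
      setIntegral_nonneg measurableSet_Ioc (fun x _ => hf0 x)
    linarith
  have hmeas_gj : AEStronglyMeasurable (fun τ => g τ ^ j) (volume.restrict (Set.Ioc 0 t)) :=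
    ((hgc.pow j).mono Set.Ioc_subset_Icc_self).aestronglyMeasurable measurableSet_Ioc
  apply Integrable.mono' (hf.mul_const ((g t) ^ j))
  · exact hf.aestronglyMeasurable.mul hmeas_gj
  · rw [ae_restrict_iff' measurableSet_Ioc]
    filter_upwards with τ hτ
    have h1 : 0 ≤ g τ := hgnn τ ⟨hτ.1.le, hτ.2⟩
    have h2 : g τ ≤ g t := hgmono τ ⟨hτ.1.le, hτ.2⟩
    rw [Real.norm_eq_abs, abs_of_nonneg (mul_nonneg (hf0 τ) (pow_nonneg h1 j))]
    exact mul_le_mul_of_nonneg_left (pow_le_pow_left₀ h1 h2 j) (hf0 τ)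

abbrev Mt' (d : ℕ) := (Fin d → ℝ) →L[ℝ] (Fin d → ℝ)

lemma apply_aesm {d : ℕ} {T : ℝ} {A : ℝ → Mt' d}
    (hA : AEStronglyMeasurable A (volume.restrict (Set.Ioc (0:ℝ) T)))
    {y : ℝ → Fin d → ℝ} (hy : ContinuousOn y (Set.Icc 0 T)) :
    AEStronglyMeasurable (fun τ => A τ (y τ)) (volume.restrict (Set.Ioc (0:ℝ) T)) := by
  have hym : AEStronglyMeasurable y (volume.restrict (Set.Ioc (0:ℝ) T)) :=
    (hy.mono Set.Ioc_subset_Icc_self).aestronglyMeasurable measurableSet_Ioc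
  exact isBoundedBilinearMap_apply.continuous.comp_aestronglyMeasurable (hA.prodMk hym)

lemma apply_integrable {d : ℕ} {T : ℝ} {A : ℝ → Mt' d}
    (hA : IntegrableOn A (Set.Ioc (0:ℝ) T))
    {y : ℝ → Fin d → ℝ} (hy : ContinuousOn y (Set.Icc 0 T)) :
    IntegrableOn (fun τ => A τ (y τ)) (Set.Ioc (0:ℝ) T) := by
  rcases le_or_gt 0 T with hT | hT
  swap
  · rw [Set.Ioc_eq_empty (by linarith)]
    simp [IntegrableOn]
  obtain ⟨C, hC⟩ := (isCompact_Icc (a := (0:ℝ)) (b := T)).exists_bound_of_continuousOn hy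
  apply Integrable.mono' (hA.norm.mul_const C) (apply_aesm hA.aestronglyMeasurable hy)
  rw [ae_restrict_iff' measurableSet_Ioc]
  filter_upwards with τ hτ
  calc ‖A τ (y τ)‖ ≤ ‖A τ‖ * ‖y τ‖ := (A τ).le_opNorm _
    _ ≤ ‖A τ‖ * C :=
      mul_le_mul_of_nonneg_left (hC τ ⟨hτ.1.le, hτ.2⟩) (norm_nonneg _)

lemma step_bound {d : ℕ} {T : ℝ} {A : ℝ → Mt' d}
    (hA : IntegrableOn A (Set.Ioc (0:ℝ) T))
    {y : ℝ → Fin d → ℝ} (hy : ContinuousOn y (Set.Icc 0 T))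
    {K : ℝ} (hK : 0 ≤ K) (j : ℕ)
    (hb : ∀ τ ∈ Set.Icc (0:ℝ) T,
      ‖y τ‖ ≤ (∫ σ in Set.Ioc (0:ℝ) τ, ‖A σ‖) ^ j / (j.factorial : ℝ) * K)
    {t : ℝ} (ht : t ∈ Set.Icc (0:ℝ) T) :
    ‖∫ τ in Set.Ioc (0:ℝ) t, A τ (y τ)‖ ≤
      (∫ σ in Set.Ioc (0:ℝ) t, ‖A σ‖) ^ (j+1) / ((j+1).factorial : ℝ) * K := by
  set f : ℝ → ℝ := fun σ => ‖A σ‖ with hfdef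
  set g : ℝ → ℝ := fun s => ∫ σ in Set.Ioc 0 s, f σ with hgdef
  have hf0 : ∀ τ, 0 ≤ f τ := fun τ => norm_nonneg _
  have hfl : IntegrableOn f (Set.Ioc 0 t) :=
    IntegrableOn.mono_set hA.norm (Set.Ioc_subset_Ioc le_rfl ht.2)
  have hdom : IntegrableOn (fun τ => (f τ * g τ ^ j) * (K / (j.factorial : ℝ)))
      (Set.Ioc 0 t) := (gpow_integrable f t hfl hf0 j).mul_const _
  have haebd : ∀ᵐ τ ∂(volume.restrict (Set.Ioc (0:ℝ) t)),
      ‖A τ (y τ)‖ ≤ (f τ * g τ ^ j) * (K / (j.factorial : ℝ)) := by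
    rw [ae_restrict_iff' measurableSet_Ioc]
    filter_upwards with τ hτ
    have hτI : τ ∈ Set.Icc (0:ℝ) T := ⟨hτ.1.le, le_trans hτ.2 ht.2⟩
    calc ‖A τ (y τ)‖ ≤ ‖A τ‖ * ‖y τ‖ := (A τ).le_opNorm _
      _ ≤ ‖A τ‖ * (g τ ^ j / (j.factorial : ℝ) * K) :=
          mul_le_mul_of_nonneg_left (hb τ hτI) (norm_nonneg _)
      _ = (f τ * g τ ^ j) * (K / (j.factorial : ℝ)) := by ring
  have h1 := norm_integral_le_of_norm_le hdom haebd
  rw [MeasureTheory.integral_mul_const] at h1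
  have hkey := key_ineq f t ht.1 hfl hf0 j
  have hKj : 0 ≤ K / (j.factorial : ℝ) := by positivity
  have h2 : ‖∫ τ in Set.Ioc (0:ℝ) t, A τ (y τ)‖
      ≤ (g t ^ (j+1) / ((j:ℝ)+1)) * (K / (j.factorial : ℝ)) :=
    le_trans h1 (mul_le_mul_of_nonneg_right hkey hKj)
  have hfac : (((j+1).factorial : ℕ) : ℝ) = ((j:ℝ)+1) * (j.factorial : ℝ) := by
    rw [Nat.factorial_succ]; push_cast; ring
  have hfacpos : (0:ℝ) < (j.factorial : ℝ) := by exact_mod_cast j.factorial_pos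
  have h3 : (g t ^ (j+1) / ((j:ℝ)+1)) * (K / (j.factorial : ℝ))
      = g t ^ (j+1) / (((j+1).factorial : ℕ) : ℝ) * K := by
    rw [hfac]
    field_simp
  rw [h3] at h2
  exact h2

noncomputable def picardIter' {d : ℕ} (A : ℝ → Mt' d) (p : Fin d → ℝ) : ℕ → ℝ → Fin d → ℝ
  | 0, _ => p
  | j + 1, t => ∫ τ in Set.Ioc (0 : ℝ) t, A τ (picardIter' A p j τ)

lemma picard_props {d : ℕ} {T : ℝ} {A : ℝ → Mt' d}
    (hA : IntegrableOn A (Set.Ioc (0:ℝ) T)) (p : Fin d → ℝ) (j : ℕ) :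
    ContinuousOn (picardIter' A p j) (Set.Icc 0 T) ∧
    ∀ t ∈ Set.Icc (0:ℝ) T, ‖picardIter' A p j t‖ ≤
      (∫ τ in Set.Ioc (0:ℝ) t, ‖A τ‖) ^ j / (j.factorial : ℝ) * ‖p‖ := by
  induction j with
  | zero =>
    refine ⟨continuousOn_const, ?_⟩
    intro t _
    have h0 : picardIter' A p 0 t = p := rfl
    rw [h0]
    simp
  | succ j ih =>
    have heq : picardIter' A p (j+1)
        = fun t => ∫ τ in Set.Ioc (0:ℝ) t, A τ (picardIter' A p j τ) := rfl
    have hint : IntegrableOn (fun τ => A τ (picardIter' A p j τ)) (Set.Ioc (0:ℝ) T) :=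
      apply_integrable hA ih.1
    refine ⟨?_, ?_⟩
    · rw [heq]
      exact intervalIntegral.continuousOn_primitive
        ((integrableOn_Icc_iff_integrableOn_Ioc).mpr hint)
    · intro t ht
      rw [heq]
      exact step_bound hA ih.1 (norm_nonneg p) j ih.2 ht

lemma remainder_bound {d : ℕ} {T : ℝ} {A : ℝ → Mt' d}
    (hA : IntegrableOn A (Set.Ioc (0:ℝ) T)) (p : Fin d → ℝ)
    {x : ℝ → Fin d → ℝ} (hxc : ContinuousOn x (Set.Icc 0 T))
    (hx : ∀ t ∈ Set.Icc (0:ℝ) T, x t = p + ∫ τ in Set.Ioc (0:ℝ) t, A τ (x τ))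
    {C : ℝ} (hC0 : 0 ≤ C) (hC : ∀ t ∈ Set.Icc (0:ℝ) T, ‖x t‖ ≤ C) :
    ∀ M : ℕ, ∀ t ∈ Set.Icc (0:ℝ) T,
      ‖x t - ∑ j ∈ Finset.range M, picardIter' A p j t‖ ≤
        (∫ τ in Set.Ioc (0:ℝ) t, ‖A τ‖) ^ M / (M.factorial : ℝ) * C := by
  intro M
  induction M with
  | zero =>
    intro t ht
    simpa using hC t ht
  | succ M ih =>
    have hRc : ContinuousOn (fun τ => x τ - ∑ j ∈ Finset.range M, picardIter' A p j τ)
        (Set.Icc 0 T) := by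
      apply hxc.sub
      exact continuousOn_finset_sum _ (fun j _ => (picard_props hA p j).1)
    intro t ht
    have hint1 : IntegrableOn (fun τ => A τ (x τ)) (Set.Ioc (0:ℝ) t) :=
      IntegrableOn.mono_set (apply_integrable hA hxc) (Set.Ioc_subset_Ioc le_rfl ht.2)
    have hintj : ∀ j, IntegrableOn (fun τ => A τ (picardIter' A p j τ)) (Set.Ioc (0:ℝ) t) :=
      fun j => IntegrableOn.mono_set (apply_integrable hA (picard_props hA p j).1)
        (Set.Ioc_subset_Ioc le_rfl ht.2)
    have hint2 : IntegrableOn (fun τ => A τ (∑ j ∈ Finset.range M, picardIter' A p j τ))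
        (Set.Ioc (0:ℝ) t) :=
      IntegrableOn.mono_set
        (apply_integrable hA (continuousOn_finset_sum _ (fun j _ => (picard_props hA p j).1)))
        (Set.Ioc_subset_Ioc le_rfl ht.2)
    have hsum : ∑ j ∈ Finset.range (M+1), picardIter' A p j t
        = p + ∫ τ in Set.Ioc (0:ℝ) t, A τ (∑ j ∈ Finset.range M, picardIter' A p j τ) := by
      rw [Finset.sum_range_succ']
      have h0 : picardIter' A p 0 t = p := rfl
      have hterm : ∀ j, picardIter' A p (j+1) t
          = ∫ τ in Set.Ioc (0:ℝ) t, A τ (picardIter' A p j τ) := fun j => rfl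
      rw [h0, add_comm]
      congr 1
      simp_rw [hterm]
      rw [← integral_finset_sum _ (fun j _ => hintj j)]
      refine setIntegral_congr_fun measurableSet_Ioc (fun τ _ => ?_)
      rw [← map_sum]
    have hrec : x t - ∑ j ∈ Finset.range (M+1), picardIter' A p j t
        = ∫ τ in Set.Ioc (0:ℝ) t, A τ (x τ - ∑ j ∈ Finset.range M, picardIter' A p j τ) := by
      rw [hx t ht, hsum]
      simp_rw [map_sub]
      rw [integral_sub hint1 hint2]
      abel
    rw [hrec]
    exact step_bound hA hRc hC0 M ih ht


lemma picard_eq {d : ℕ} (A : ℝ → Mt d) (p : Fin d → ℝ) :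
    ∀ j, picardIter A p j = picardIter' A p j := by
  intro j
  induction j with
  | zero => rfl
  | succ j ih =>
    funext t
    show (∫ τ in Set.Ioc (0:ℝ) t, A τ (picardIter A p j τ))
      = ∫ τ in Set.Ioc (0:ℝ) t, A τ (picardIter' A p j τ)
    rw [ih]

set_option maxHeartbeats 1000000 in
/-- For `A ∈ L¹((0,T); M_d(ℝ))`, the solution of `x' = A(t)x`, `x(0) = p` (in the
Carathéodory/integral sense) is the absolutely convergent iterated-integral series
`x(t) = p + ∑_{j≥1} ∫_{0<τ₁<⋯<τ_j<t} A(τ_j)⋯A(τ₁) p dτ`, and the `M`-th remainder is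
bounded by `(‖A‖_{L¹(0,t)}^M / M!) ‖p‖ e^{‖A‖_{L¹(0,t)}}`. -/
theorem stmt9 {d : ℕ} (T : ℝ) (hT : 0 < T) (A : ℝ → Mt d)
    (hA : IntegrableOn A (Set.Ioc (0 : ℝ) T))
    (p : Fin d → ℝ) (x : ℝ → Fin d → ℝ)
    (hxc : ContinuousOn x (Set.Icc 0 T))
    (hx : ∀ t ∈ Set.Icc (0 : ℝ) T,
      x t = p + ∫ τ in Set.Ioc (0 : ℝ) t, A τ (x τ)) :
    ∀ t ∈ Set.Icc (0 : ℝ) T,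
      (Summable fun j : ℕ => ‖picardIter A p j t‖) ∧
      HasSum (fun j : ℕ => picardIter A p j t) (x t) ∧
      ∀ M : ℕ,
        ‖x t - ∑ j ∈ Finset.range M, picardIter A p j t‖ ≤
          (∫ τ in Set.Ioc (0 : ℝ) t, ‖A τ‖) ^ M / (M.factorial : ℝ) * ‖p‖
            * Real.exp (∫ τ in Set.Ioc (0 : ℝ) t, ‖A τ‖) := by


  intro t ht
  simp only [picard_eq]
  set c : ℝ := ∫ τ in Set.Ioc (0 : ℝ) t, ‖A τ‖ with hcdef
  have hc0 : 0 ≤ c := setIntegral_nonneg measurableSet_Ioc (fun τ _ => norm_nonneg _)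
  have hbd : ∀ j : ℕ, ‖picardIter' A p j t‖ ≤ c ^ j / (j.factorial : ℝ) * ‖p‖ :=
    fun j => (picard_props hA p j).2 t ht
  have hsummaj : Summable (fun j : ℕ => c ^ j / (j.factorial : ℝ) * ‖p‖) :=
    (Real.summable_pow_div_factorial c).mul_right ‖p‖
  have hsummable_norm : Summable (fun j : ℕ => ‖picardIter' A p j t‖) :=
    Summable.of_nonneg_of_le (fun j => norm_nonneg _) hbd hsummaj
  have hsum : Summable (fun j : ℕ => picardIter' A p j t) :=
    hsummable_norm.of_norm
  -- bound on x
  obtain ⟨C0, hC0'⟩ := (isCompact_Icc (a := (0:ℝ)) (b := T)).exists_bound_of_continuousOn hxc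
  set C : ℝ := max C0 0 with hCdef
  have hC0 : 0 ≤ C := le_max_right _ _
  have hC : ∀ s ∈ Set.Icc (0:ℝ) T, ‖x s‖ ≤ C :=
    fun s hs => le_trans (hC0' s hs) (le_max_left _ _)
  have hrem := remainder_bound hA p hxc hx hC0 hC
  -- partial sums tend to x t
  have h1 : Filter.Tendsto (fun M : ℕ => c ^ M / (M.factorial : ℝ) * C)
      Filter.atTop (nhds 0) := by
    have := (FloorSemiring.tendsto_pow_div_factorial_atTop c).mul_const C
    rwa [zero_mul] at this
  have htend : Filter.Tendsto (fun M : ℕ => ∑ j ∈ Finset.range M, picardIter' A p j t)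
      Filter.atTop (nhds (x t)) := by
    rw [tendsto_iff_norm_sub_tendsto_zero]
    apply squeeze_zero (fun M => norm_nonneg _) _ h1
    intro M
    rw [norm_sub_rev]
    exact hrem M t ht
  have heq : (∑' j : ℕ, picardIter' A p j t) = x t :=
    tendsto_nhds_unique hsum.hasSum.tendsto_sum_nat htend
  refine ⟨hsummable_norm, heq ▸ hsum.hasSum, ?_⟩
  -- tail bound
  intro M
  have htail : x t - ∑ j ∈ Finset.range M, picardIter' A p j t
      = ∑' i : ℕ, picardIter' A p (i + M) t := by
    rw [← heq, ← Summable.sum_add_tsum_nat_add M hsum]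
    abel
  rw [htail]
  have hsumshift : Summable (fun i : ℕ => ‖picardIter' A p (i + M) t‖) :=
    (summable_nat_add_iff M).mpr hsummable_norm
  have hRHSsummable : Summable (fun i : ℕ => c ^ M / (M.factorial : ℝ) * ‖p‖ * (c ^ i / (i.factorial : ℝ))) :=
    (Real.summable_pow_div_factorial c).mul_left _
  have hterm : ∀ i : ℕ, ‖picardIter' A p (i + M) t‖
      ≤ c ^ M / (M.factorial : ℝ) * ‖p‖ * (c ^ i / (i.factorial : ℝ)) := by
    intro i
    refine le_trans (hbd (i + M)) ?_
    have hdvd : (i.factorial * M.factorial : ℕ) ∣ (i + M).factorial :=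
      Nat.factorial_mul_factorial_dvd_factorial_add i M
    have hle : ((i.factorial * M.factorial : ℕ) : ℝ) ≤ ((i + M).factorial : ℝ) :=
      Nat.cast_le.mpr (Nat.le_of_dvd (i + M).factorial_pos hdvd)
    have hpos1 : (0:ℝ) < ((i.factorial * M.factorial : ℕ) : ℝ) := by
      exact_mod_cast Nat.mul_pos i.factorial_pos M.factorial_pos
    have h2 : c ^ (i + M) / ((i + M).factorial : ℝ)
        ≤ c ^ (i + M) / ((i.factorial * M.factorial : ℕ) : ℝ) :=
      div_le_div_of_nonneg_left (pow_nonneg hc0 _) hpos1 hle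
    calc c ^ (i + M) / ((i + M).factorial : ℝ) * ‖p‖
        ≤ c ^ (i + M) / ((i.factorial * M.factorial : ℕ) : ℝ) * ‖p‖ :=
          mul_le_mul_of_nonneg_right h2 (norm_nonneg p)
      _ = c ^ M / (M.factorial : ℝ) * ‖p‖ * (c ^ i / (i.factorial : ℝ)) := by
          rw [pow_add]
          push_cast
          field_simp
  calc ‖∑' i : ℕ, picardIter' A p (i + M) t‖
      ≤ ∑' i : ℕ, ‖picardIter' A p (i + M) t‖ := norm_tsum_le_tsum_norm hsumshift
    _ ≤ ∑' i : ℕ, c ^ M / (M.factorial : ℝ) * ‖p‖ * (c ^ i / (i.factorial : ℝ)) :=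
        Summable.tsum_le_tsum hterm hsumshift hRHSsummable
    _ = c ^ M / (M.factorial : ℝ) * ‖p‖ * ∑' i : ℕ, (c ^ i / (i.factorial : ℝ)) :=
        tsum_mul_left
    _ = c ^ M / (M.factorial : ℝ) * ‖p‖ * Real.exp c := by
        congr 1
        rw [Real.exp_eq_exp_ℝ, NormedSpace.exp_eq_tsum_div]
end
end

section
/- Let r₂ > 0, r₁ ∈ [r₂/e, r₂), and f analytic on a compact K ⊂ K^a with finite analytic norm ⦀f⦀_{r₂} := ∑_α (r₂^{|α|}/α!) ‖∂^α f‖_{L^∞(K)}. Then for each coordinate direction j, ⦀∂_j f⦀_{r₁} ≤ ⦀f⦀_{r₂} / (r₂ − r₁). -/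
open scoped ENNReal

noncomputable section

variable {a : ℕ}

/-- Partial derivative `∂_j f`. -/
def pd (j : Fin a) (f : (Fin a → ℝ) → ℝ) : (Fin a → ℝ) → ℝ :=
  fun x => fderiv ℝ f x (Pi.single j 1)

/-- Iterated partial derivative `∂^α f` (the partials being applied in a fixed
canonical order, which is irrelevant for smooth functions). -/
def pmulti (α : Fin a → ℕ) (f : (Fin a → ℝ) → ℝ) : (Fin a → ℝ) → ℝ :=
  ((List.ofFn fun j : Fin a => (pd j)^[α j]).foldr (· ∘ ·) id) f

/-- The `L^∞(K)` norm, valued in `ℝ≥0∞`. -/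
def supOn (K : Set (Fin a → ℝ)) (g : (Fin a → ℝ) → ℝ) : ℝ≥0∞ :=
  ⨆ x ∈ K, (‖g x‖₊ : ℝ≥0∞)

/-- The analytic norm of radius `r` on `K`:
`⦀f⦀_r = ∑_{α ∈ ℕ^a} (r^{|α|}/α!) ‖∂^α f‖_{L^∞(K)}`, valued in `ℝ≥0∞`. -/
def anNorm (r : ℝ) (K : Set (Fin a → ℝ)) (f : (Fin a → ℝ) → ℝ) : ℝ≥0∞ :=
  ∑' α : Fin a → ℕ,
    ENNReal.ofReal (r ^ (∑ j, α j) / ∏ j, ((α j).factorial : ℝ)) * supOn K (pmulti α f)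

/-! ### Auxiliary lemmas -/

/-- Apply a list of partial derivatives, rightmost first. -/
def pdList (L : List (Fin a)) (f : (Fin a → ℝ) → ℝ) : (Fin a → ℝ) → ℝ :=
  L.foldr (fun k g => pd k g) f

lemma pdList_append (L₁ L₂ : List (Fin a)) (f : (Fin a → ℝ) → ℝ) :
    pdList (L₁ ++ L₂) f = pdList L₁ (pdList L₂ f) :=
  List.foldr_append ..

lemma pdList_replicate (n : ℕ) (k : Fin a) (f : (Fin a → ℝ) → ℝ) :
    pdList (List.replicate n k) f = (pd k)^[n] f := by
  induction n with
  | zero => rfl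
  | succ n ih =>
      rw [List.replicate_succ]
      show pd k (pdList (List.replicate n k) f) = _
      rw [ih, Function.iterate_succ_apply']

lemma foldr_comp_apply {X : Type*} (gs : List (X → X)) (f : X) :
    (gs.foldr (· ∘ ·) id) f = gs.foldr (fun g y => g y) f := by
  induction gs with
  | nil => rfl
  | cons g gs ih => simp only [List.foldr_cons, Function.comp_apply, ih]

lemma pmulti_eq_foldr (α : Fin a → ℕ) (f : (Fin a → ℝ) → ℝ) :
    pmulti α f = (List.finRange a).foldr (fun k y => (pd k)^[α k] y) f := by
  rw [pmulti, foldr_comp_apply, List.ofFn_eq_map, List.foldr_map]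

lemma foldr_eq_pdList (α : Fin a → ℕ) (L : List (Fin a)) (f : (Fin a → ℝ) → ℝ) :
    L.foldr (fun k y => (pd k)^[α k] y) f
      = pdList ((L.map fun k => List.replicate (α k) k).flatten) f := by
  induction L with
  | nil => rfl
  | cons k L ih =>
      rw [List.foldr_cons, List.map_cons, List.flatten_cons, pdList_append,
        pdList_replicate, ih]

section OpenSet

variable {Uo : Set (Fin a → ℝ)}

lemma pd_congrOn (hUo : IsOpen Uo) {g h : (Fin a → ℝ) → ℝ} (hgh : Set.EqOn g h Uo) (j : Fin a) :
    Set.EqOn (pd j g) (pd j h) Uo := fun x hx => by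
  have hev : g =ᶠ[nhds x] h := Filter.eventuallyEq_of_mem (hUo.mem_nhds hx) hgh
  simp only [pd, hev.fderiv_eq]

lemma pd_smoothOn (hUo : IsOpen Uo) {f : (Fin a → ℝ) → ℝ} (hf : ContDiffOn ℝ (⊤ : ℕ∞) f Uo) (j : Fin a) :
    ContDiffOn ℝ (⊤ : ℕ∞) (pd j f) Uo := by
  have h1 : ContDiffOn ℝ (⊤ : ℕ∞) (fderiv ℝ f) Uo :=
    hf.fderiv_of_isOpen hUo (by exact_mod_cast le_top)
  exact h1.clm_apply contDiffOn_const

lemma pd_commOn (hUo : IsOpen Uo) {f : (Fin a → ℝ) → ℝ} (hf : ContDiffOn ℝ (⊤ : ℕ∞) f Uo) (j k : Fin a) :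
    Set.EqOn (pd j (pd k f)) (pd k (pd j f)) Uo := by
  intro x hx
  have hat : ContDiffAt ℝ (⊤ : ℕ∞) f x := hf.contDiffAt (hUo.mem_nhds hx)
  have hd : DifferentiableAt ℝ (fderiv ℝ f) x := by
    have h1 : ContDiffAt ℝ 1 (fderiv ℝ f) x :=
      hat.fderiv_right (m := 1) (by norm_cast)
    exact h1.differentiableAt one_ne_zero
  have hsymm : IsSymmSndFDerivAt ℝ f x :=
    hat.isSymmSndFDerivAt (by rw [minSmoothness_of_isRCLikeNormedField]; norm_cast)
  have hcalc : ∀ v w : Fin a → ℝ,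
      fderiv ℝ (fun y => fderiv ℝ f y v) x w = fderiv ℝ (fderiv ℝ f) x w v := by
    intro v w
    rw [fderiv_clm_apply hd (differentiableAt_const v)]
    simp
  show (fderiv ℝ (fun y => fderiv ℝ f y (Pi.single k 1)) x) (Pi.single j 1)
      = (fderiv ℝ (fun y => fderiv ℝ f y (Pi.single j 1)) x) (Pi.single k 1)
  rw [hcalc, hcalc, hsymm.eq]

lemma pdList_smoothOn (hUo : IsOpen Uo) {f : (Fin a → ℝ) → ℝ} (hf : ContDiffOn ℝ (⊤ : ℕ∞) f Uo)
    (L : List (Fin a)) : ContDiffOn ℝ (⊤ : ℕ∞) (pdList L f) Uo := by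
  induction L with
  | nil => exact hf
  | cons k L ih => exact pd_smoothOn hUo ih k

lemma pdList_congrOn (hUo : IsOpen Uo) {g h : (Fin a → ℝ) → ℝ} (hgh : Set.EqOn g h Uo) (L : List (Fin a)) :
    Set.EqOn (pdList L g) (pdList L h) Uo := by
  induction L with
  | nil => exact hgh
  | cons k L ih => exact pd_congrOn hUo ih k

lemma pdList_comm (hUo : IsOpen Uo) {f : (Fin a → ℝ) → ℝ} (hf : ContDiffOn ℝ (⊤ : ℕ∞) f Uo) (j : Fin a)
    (L : List (Fin a)) :
    Set.EqOn (pdList L (pd j f)) (pd j (pdList L f)) Uo := by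
  induction L with
  | nil => exact fun x _ => rfl
  | cons k L ih =>
      show Set.EqOn (pd k (pdList L (pd j f))) (pd j (pd k (pdList L f))) Uo
      exact (pd_congrOn hUo ih k).trans (pd_commOn hUo (pdList_smoothOn hUo hf L) k j)

lemma pmulti_update (hUo : IsOpen Uo) {f : (Fin a → ℝ) → ℝ} (hf : ContDiffOn ℝ (⊤ : ℕ∞) f Uo)
    (α : Fin a → ℕ) (j : Fin a) :
    Set.EqOn (pmulti (Function.update α j (α j + 1)) f) (pmulti α (pd j f)) Uo := by
  obtain ⟨s, t, hst⟩ := List.append_of_mem (List.mem_finRange j)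
  have hnd : (s ++ j :: t).Nodup := hst ▸ List.nodup_finRange a
  have hdisj := List.disjoint_of_nodup_append hnd
  have hjs : j ∉ s := fun h => hdisj h List.mem_cons_self
  have hjt : j ∉ t := (List.nodup_cons.mp hnd.of_append_right).1
  set β := Function.update α j (α j + 1) with hβ
  have hmapS : s.map (fun k => List.replicate (β k) k) = s.map (fun k => List.replicate (α k) k) :=
    List.map_congr_left fun k hk => by
      rw [hβ, Function.update_of_ne (ne_of_mem_of_not_mem hk hjs)]
  have hmapT : t.map (fun k => List.replicate (β k) k) = t.map (fun k => List.replicate (α k) k) :=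
    List.map_congr_left fun k hk => by
      rw [hβ, Function.update_of_ne (ne_of_mem_of_not_mem hk hjt)]
  have hβj : β j = α j + 1 := Function.update_self ..
  set S := (s.map fun k => List.replicate (α k) k).flatten with hS
  set T := (t.map fun k => List.replicate (α k) k).flatten with hT
  have e1 : pmulti β f
      = pdList S (pdList (List.replicate (α j) j)
          (pd j (pdList T f))) := by
    rw [pmulti_eq_foldr, foldr_eq_pdList, hst, List.map_append, List.map_cons, hmapS, hmapT,
      List.flatten_append, List.flatten_cons, hβj, List.replicate_succ',
      pdList_append, List.append_assoc, pdList_append, pdList_append]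
    rfl
  have e2 : pmulti α (pd j f)
      = pdList S (pdList (List.replicate (α j) j) (pdList T (pd j f))) := by
    rw [pmulti_eq_foldr, foldr_eq_pdList, hst, List.map_append, List.map_cons,
      List.flatten_append, List.flatten_cons, pdList_append, pdList_append]
  rw [e1, e2]
  exact pdList_congrOn hUo
    (pdList_congrOn hUo ((pdList_comm hUo hf j T).symm) (List.replicate (α j) j)) S

end OpenSet

lemma supOn_congr_of_eqOn {K : Set (Fin a → ℝ)} {g h : (Fin a → ℝ) → ℝ}
    (hgh : Set.EqOn g h K) : supOn K g = supOn K h := by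
  unfold supOn
  refine iSup_congr fun x => ?_
  by_cases hx : x ∈ K
  · simp [hx, hgh hx]
  · simp [hx]

lemma scalar_ineq {r₁ r₂ : ℝ} (h0 : 0 < r₁) (h12 : r₁ < r₂) (n : ℕ) :
    (n + 1 : ℝ) * (r₂ - r₁) * r₁ ^ n ≤ r₂ ^ (n + 1) := by
  have ht : (0:ℝ) ≤ (r₂ - r₁) / r₁ := div_nonneg (by linarith) h0.le
  have hb := one_add_mul_le_pow (a := (r₂ - r₁)/r₁) (by linarith) (n+1)
  have hx : (1 + (r₂ - r₁)/r₁) = r₂ / r₁ := by field_simp; ring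
  rw [hx] at hb
  have hb' : (n+1 : ℝ) * ((r₂-r₁)/r₁) ≤ (r₂/r₁)^(n+1) := by
    push_cast at hb; linarith
  have hmul := mul_le_mul_of_nonneg_right hb' (le_of_lt (pow_pos h0 (n+1)))
  calc (n+1:ℝ) * (r₂ - r₁) * r₁^n = (n+1:ℝ) * ((r₂-r₁)/r₁) * r₁^(n+1) := by
        field_simp; ring
    _ ≤ (r₂/r₁)^(n+1) * r₁^(n+1) := hmul
    _ = r₂^(n+1) := by
        rw [div_pow]
        field_simp

/-- Control of gradients for analytic norms: if `0 < r₂`, `r₂/e ≤ r₁ < r₂` and `f` is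
analytic on a neighborhood of the compact set `K` with `⦀f⦀_{r₂} < ∞`, then
`⦀∂_j f⦀_{r₁} ≤ ⦀f⦀_{r₂}/(r₂ − r₁)`. -/
theorem stmt10 (K : Set (Fin a → ℝ)) (hK : IsCompact K)
    (r₁ r₂ : ℝ) (hr₂ : 0 < r₂) (hr₁ : r₂ / Real.exp 1 ≤ r₁) (hr₁₂ : r₁ < r₂)
    (Uo : Set (Fin a → ℝ)) (hUo : IsOpen Uo) (hKU : K ⊆ Uo)
    (f : (Fin a → ℝ) → ℝ) (hf : ContDiffOn ℝ (⊤ : ℕ∞) f Uo)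
    (hfin : anNorm r₂ K f ≠ ⊤) (j : Fin a) :
    anNorm r₁ K (pd j f) ≤ ENNReal.ofReal (1 / (r₂ - r₁)) * anNorm r₂ K f := by
  have hr₁0 : 0 < r₁ := lt_of_lt_of_le (div_pos hr₂ (Real.exp_pos 1)) hr₁
  set u : (Fin a → ℕ) → (Fin a → ℕ) := fun α => Function.update α j (α j + 1) with hu_def
  have hval : ∀ (α : Fin a → ℕ) (k : Fin a), u α k = α k + if k = j then 1 else 0 := by
    intro α k
    by_cases hk : k = j
    · subst hk; simp [hu_def]
    · simp [hu_def, Function.update_of_ne hk, hk]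
  have hEq : ∀ α : Fin a → ℕ,
      supOn K (pmulti α (pd j f)) = supOn K (pmulti (u α) f) :=
    fun α => (supOn_congr_of_eqOn fun x hx => pmulti_update hUo hf α j (hKU hx)).symm
  have hu : Function.Injective u := by
    intro α α' h
    funext k
    by_cases hk : k = j
    · subst hk
      have h1 := congrFun h k
      simpa [hu_def] using h1
    · have h1 := congrFun h k
      simpa [hu_def, Function.update_of_ne hk] using h1
  have hterm : ∀ α : Fin a → ℕ,
      ENNReal.ofReal (r₁ ^ (∑ k, α k) / ∏ k, ((α k).factorial : ℝ))
        ≤ ENNReal.ofReal (1/(r₂-r₁))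
            * ENNReal.ofReal (r₂ ^ (∑ k, u α k) / ∏ k, ((u α k).factorial : ℝ)) := by
    intro α
    have hP : (0:ℝ) < ∏ k, ((α k).factorial : ℝ) :=
      Finset.prod_pos fun k _ => Nat.cast_pos.mpr (α k).factorial_pos
    have hsum : (∑ k, u α k) = (∑ k, α k) + 1 := by
      simp only [hval]
      rw [Finset.sum_add_distrib]
      simp
    have hprod : (∏ k, ((u α k).factorial : ℝ))
        = ((α j : ℝ) + 1) * ∏ k, ((α k).factorial : ℝ) := by
      rw [← Finset.mul_prod_erase Finset.univ _ (Finset.mem_univ j),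
        ← Finset.mul_prod_erase Finset.univ (fun k => ((α k).factorial : ℝ)) (Finset.mem_univ j)]
      have h1 : ((u α j).factorial : ℝ) = ((α j : ℝ) + 1) * ((α j).factorial : ℝ) := by
        have : u α j = α j + 1 := by simp [hval]
        rw [this, Nat.factorial_succ]
        push_cast
        ring
      have h2 : ∀ k ∈ Finset.univ.erase j, ((u α k).factorial : ℝ) = ((α k).factorial : ℝ) := by
        intro k hk
        rw [hval α k, if_neg (Finset.mem_erase.mp hk).1, Nat.add_zero]
      rw [Finset.prod_congr rfl h2, h1]
      ring
    rw [← ENNReal.ofReal_mul (one_div_nonneg.mpr (by linarith))]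
    apply ENNReal.ofReal_le_ofReal
    rw [hsum, hprod]
    set n := ∑ k, α k with hn
    set P := ∏ k, ((α k).factorial : ℝ) with hPdef
    set A := ((α j : ℝ) + 1) with hA
    have hA0 : 0 < A := by positivity
    have hαj : A ≤ (n : ℝ) + 1 := by
      have h3 : α j ≤ ∑ k, α k := Finset.single_le_sum (fun k _ => Nat.zero_le _) (Finset.mem_univ j)
      rw [hA, hn]
      exact_mod_cast Nat.succ_le_succ h3
    have hkey : ((n : ℝ) + 1) * (r₂ - r₁) * r₁ ^ n ≤ r₂ ^ (n + 1) := scalar_ineq hr₁0 hr₁₂ n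
    have hsub : (0:ℝ) < r₂ - r₁ := sub_pos.mpr hr₁₂
    rw [show (1/(r₂-r₁)) * (r₂^(n+1) / (A*P)) = r₂^(n+1) / ((r₂-r₁)*(A*P)) by
      rw [div_mul_div_comm, one_mul]]
    rw [div_le_div_iff₀ hP (by positivity)]
    have h1 : r₁^n * (r₂-r₁) * A ≤ r₂^(n+1) := by
      nlinarith [mul_le_mul_of_nonneg_left hαj (mul_nonneg (pow_nonneg hr₁0.le n) hsub.le), hkey]
    nlinarith [mul_le_mul_of_nonneg_right h1 hP.le, pow_nonneg hr₁0.le n]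
  calc anNorm r₁ K (pd j f)
      = ∑' α : Fin a → ℕ,
          ENNReal.ofReal (r₁ ^ (∑ k, α k) / ∏ k, ((α k).factorial : ℝ))
            * supOn K (pmulti (u α) f) := by
        unfold anNorm
        exact tsum_congr fun α => by rw [hEq α]
    _ ≤ ∑' α : Fin a → ℕ,
          ENNReal.ofReal (1/(r₂-r₁))
            * (ENNReal.ofReal (r₂ ^ (∑ k, u α k) / ∏ k, ((u α k).factorial : ℝ))
              * supOn K (pmulti (u α) f)) := by
        refine ENNReal.tsum_le_tsum fun α => ?_
        rw [← mul_assoc]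
        exact mul_le_mul_left (hterm α) _
    _ = ENNReal.ofReal (1/(r₂-r₁))
          * ∑' α : Fin a → ℕ,
            ENNReal.ofReal (r₂ ^ (∑ k, u α k) / ∏ k, ((u α k).factorial : ℝ))
              * supOn K (pmulti (u α) f) := ENNReal.tsum_mul_left
    _ ≤ ENNReal.ofReal (1 / (r₂ - r₁)) * anNorm r₂ K f := by
        refine mul_le_mul_right ?_ _
        exact ENNReal.tsum_comp_le_tsum_of_injective hu
          (fun β => ENNReal.ofReal (r₂ ^ (∑ k, β k) / ∏ k, ((β k).factorial : ℝ))
            * supOn K (pmulti β f))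
end
end

section
/- Let J be a totally ordered set and (A_j)_{j∈J} matrices in M_d(K) with ∑_{j∈J} ‖A_j‖ < ∞. Then the ordered product of the exponentials e^{A_j} over J converges: there exists a matrix P such that for every ε > 0 there is a finite J_0 ⊂ J with ‖P − ∏^←_{j∈J_1} e^{A_j}‖ ≤ ε for every finite J_1 ⊇ J_0. Moreover, for finite J_0 ⊂ J_1, ‖∏^←_{j∈J_1} e^{A_j} − ∏^←_{j∈J_0} e^{A_j}‖ ≤ e^{3α} ∑_{j∈J_1∖J_0} ‖A_j‖, where α = ∑_{j∈J} ‖A_j‖. -/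
noncomputable section

/-- Ordered product `∏^←_{j ∈ s} e^{A_j}` over a finite subset of a totally ordered index set,
the factors being taken in decreasing order of the index (largest index leftmost). -/
def oprod {J : Type*} [LinearOrder J] {d : ℕ} (A : J → Mt d) (s : Finset J) : Mt d :=
  ((s.sort (· ≤ ·)).reverse.map fun j => NormedSpace.exp (A j)).prod

namespace Stmt17Aux

open NormedSpace

set_option linter.unusedSectionVars false
set_option maxHeartbeats 1000000

variable {d : ℕ}

lemma norm_one_le (d : ℕ) : ‖(1 : Mt d)‖ ≤ 1 := by
  rw [ContinuousLinearMap.one_def]; exact ContinuousLinearMap.norm_id_le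

lemma norm_pow_le_mt (X : Mt d) (n : ℕ) : ‖X ^ n‖ ≤ ‖X‖ ^ n := by
  cases n with
  | zero => simpa using norm_one_le d
  | succ n => exact norm_pow_le' X n.succ_pos

lemma real_exp_eq (x : ℝ) : Real.exp x = ∑' n : ℕ, x ^ n / n.factorial := by
  rw [Real.exp_eq_exp_ℝ, exp_eq_tsum_div]

lemma norm_term_le (X : Mt d) (n : ℕ) :
    ‖((n.factorial : ℝ)⁻¹) • X ^ n‖ ≤ ‖X‖ ^ n / n.factorial := by
  calc ‖((n.factorial : ℝ)⁻¹) • X ^ n‖ ≤ ‖((n.factorial : ℝ)⁻¹)‖ * ‖X ^ n‖ :=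
        ContinuousLinearMap.opNorm_smul_le _ _
    _ ≤ (n.factorial : ℝ)⁻¹ * ‖X‖ ^ n := by
        rw [norm_inv, Real.norm_natCast]
        exact mul_le_mul_of_nonneg_left (norm_pow_le_mt X n) (by positivity)
    _ = ‖X‖ ^ n / n.factorial := by rw [div_eq_inv_mul]

lemma norm_exp_le (X : Mt d) : ‖exp X‖ ≤ Real.exp ‖X‖ := by
  rw [exp_eq_tsum (𝕂 := ℝ), real_exp_eq]
  refine (norm_tsum_le_tsum_norm (norm_expSeries_summable' X)).trans ?_
  exact Summable.tsum_le_tsum (norm_term_le X) (norm_expSeries_summable' X)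
    (Real.summable_pow_div_factorial ‖X‖)

lemma norm_exp_sub_one_le (X : Mt d) : ‖exp X - 1‖ ≤ ‖X‖ * Real.exp ‖X‖ := by
  set f : ℕ → Mt d := fun n => ((n.factorial : ℝ)⁻¹) • X ^ n with hfdef
  have hf : HasSum f (exp X) := exp_series_hasSum_exp' X
  have hf1 : HasSum (fun n : ℕ => f (n + 1)) (exp X - 1) := by
    refine (hasSum_nat_add_iff (f := f) 1).2 ?_
    have hf0 : f 0 = 1 := by simp [hfdef]
    simpa [hf0] using hf
  have hsum1 : Summable fun n : ℕ => ‖f (n + 1)‖ :=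
    (norm_expSeries_summable' X).comp_injective (add_left_injective 1)
  have hbound : ∀ n : ℕ, ‖f (n + 1)‖ ≤ ‖X‖ * (‖X‖ ^ n / n.factorial) := by
    intro n
    refine (norm_term_le X (n + 1)).trans ?_
    rw [pow_succ, mul_comm (‖X‖ ^ n), mul_div_assoc]
    gcongr
    omega
  calc ‖exp X - 1‖ ≤ ∑' n : ℕ, ‖f (n + 1)‖ := by
        rw [← hf1.tsum_eq]; exact norm_tsum_le_tsum_norm hsum1
    _ ≤ ∑' n : ℕ, ‖X‖ * (‖X‖ ^ n / n.factorial) :=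
        Summable.tsum_le_tsum hbound hsum1
          ((Real.summable_pow_div_factorial ‖X‖).mul_left ‖X‖)
    _ = ‖X‖ * Real.exp ‖X‖ := by rw [tsum_mul_left, real_exp_eq]

variable {J : Type*} [LinearOrder J]

/-- Product of exponentials along a list (leftmost factor first). -/
def g (A : J → Mt d) (l : List J) : Mt d := (l.map fun j => exp (A j)).prod

/-- Sum of norms along a list. -/
def S (A : J → Mt d) (l : List J) : ℝ := (l.map fun j => ‖A j‖).sum

lemma S_nil (A : J → Mt d) : S A [] = 0 := rfl

lemma S_cons (A : J → Mt d) (a : J) (l : List J) : S A (a :: l) = ‖A a‖ + S A l := by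
  simp [S]

lemma S_nonneg (A : J → Mt d) (l : List J) : 0 ≤ S A l := by
  induction l with
  | nil => simp [S_nil]
  | cons a l ih => rw [S_cons]; positivity

lemma S_le_of_sublist (A : J → Mt d) {l₀ l₁ : List J} (h : List.Sublist l₀ l₁) :
    S A l₀ ≤ S A l₁ := by
  induction h with
  | slnil => exact le_refl _
  | cons a h ih => rw [S_cons]; nlinarith [norm_nonneg (A a)]
  | cons_cons a h ih => rw [S_cons, S_cons]; linarith

lemma g_nil (A : J → Mt d) : g A [] = 1 := rfl

lemma g_cons (A : J → Mt d) (a : J) (l : List J) : g A (a :: l) = exp (A a) * g A l := by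
  simp [g]

lemma g_norm_le (A : J → Mt d) (l : List J) : ‖g A l‖ ≤ Real.exp (S A l) := by
  induction l with
  | nil => simpa [g_nil, S_nil] using norm_one_le d
  | cons a l ih =>
      rw [g_cons, S_cons, Real.exp_add]
      exact (norm_mul_le _ _).trans
        (mul_le_mul (norm_exp_le _) ih (norm_nonneg _) (Real.exp_pos _).le)

lemma g_diff (A : J → Mt d) {l₀ l₁ : List J} (h : List.Sublist l₀ l₁) :
    ‖g A l₁ - g A l₀‖ ≤ Real.exp (2 * S A l₁) * (S A l₁ - S A l₀) := by
  induction h with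
  | slnil => simp
  | @cons l₀ l₁ a h ih =>
      have hS01 : S A l₀ ≤ S A l₁ := S_le_of_sublist A h
      have hS0 : 0 ≤ S A l₀ := S_nonneg A l₀
      have hS1 : 0 ≤ S A l₁ := S_nonneg A l₁
      have ha : (0:ℝ) ≤ ‖A a‖ := norm_nonneg _
      have key : g A (a :: l₁) - g A l₀
          = exp (A a) * (g A l₁ - g A l₀) + (exp (A a) - 1) * g A l₀ := by
        rw [g_cons, mul_sub, sub_mul, one_mul]; abel
      rw [key, S_cons]
      have h1 : ‖exp (A a) * (g A l₁ - g A l₀)‖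
          ≤ Real.exp ‖A a‖ * (Real.exp (2 * S A l₁) * (S A l₁ - S A l₀)) := by
        refine (norm_mul_le _ _).trans ?_
        exact mul_le_mul (norm_exp_le _) ih (norm_nonneg _) (Real.exp_pos _).le
      have h2 : ‖(exp (A a) - 1) * g A l₀‖
          ≤ ‖A a‖ * Real.exp ‖A a‖ * Real.exp (S A l₀) := by
        refine (norm_mul_le _ _).trans ?_
        exact mul_le_mul (norm_exp_sub_one_le _) (g_norm_le A l₀) (norm_nonneg _)
          (by positivity)
      refine (norm_add_le _ _).trans ((add_le_add h1 h2).trans ?_)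
      have e1 : Real.exp ‖A a‖ * Real.exp (2 * S A l₁)
          ≤ Real.exp (2 * (‖A a‖ + S A l₁)) := by
        rw [← Real.exp_add]; apply Real.exp_le_exp.2; linarith
      have e2 : Real.exp ‖A a‖ * Real.exp (S A l₀) ≤ Real.exp (2 * (‖A a‖ + S A l₁)) := by
        rw [← Real.exp_add]; apply Real.exp_le_exp.2; linarith
      have hE : (0:ℝ) < Real.exp (2 * (‖A a‖ + S A l₁)) := Real.exp_pos _
      nlinarith [Real.exp_pos ‖A a‖, Real.exp_pos (2 * S A l₁), Real.exp_pos (S A l₀)]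
  | @cons_cons l₀ l₁ a h ih =>
      have hS01 : S A l₀ ≤ S A l₁ := S_le_of_sublist A h
      rw [g_cons, g_cons, ← mul_sub, S_cons, S_cons]
      have h1 : ‖exp (A a) * (g A l₁ - g A l₀)‖
          ≤ Real.exp ‖A a‖ * (Real.exp (2 * S A l₁) * (S A l₁ - S A l₀)) := by
        refine (norm_mul_le _ _).trans ?_
        exact mul_le_mul (norm_exp_le _) ih (norm_nonneg _) (Real.exp_pos _).le
      refine h1.trans ?_
      rw [← mul_assoc, ← Real.exp_add]
      have heq : ‖A a‖ + S A l₁ - (‖A a‖ + S A l₀) = S A l₁ - S A l₀ := by ring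
      rw [heq]
      apply mul_le_mul_of_nonneg_right _ (by linarith)
      apply Real.exp_le_exp.2; nlinarith [norm_nonneg (A a)]

lemma oprod_eq_g (A : J → Mt d) (s : Finset J) :
    oprod A s = g A ((s.sort (· ≤ ·)).reverse) := rfl

lemma S_reverse (A : J → Mt d) (l : List J) : S A l.reverse = S A l := by
  simp [S, List.sum_reverse]

lemma S_sort (A : J → Mt d) (s : Finset J) :
    S A (s.sort (· ≤ ·)) = ∑ j ∈ s, ‖A j‖ := by
  rw [S, List.Perm.sum_eq ((Finset.sort_perm_toList s (· ≤ ·)).map _),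
    Finset.sum_map_toList]

lemma sort_sublist {s t : Finset J} (h : s ⊆ t) :
    List.Sublist (s.sort (· ≤ ·)) (t.sort (· ≤ ·)) := by
  apply List.sublist_of_subperm_of_pairwise (r := (· ≤ ·))
  · exact (Finset.sort_nodup s _).subperm (fun a ha => by
      rw [Finset.mem_sort] at ha ⊢; exact h ha)
  · exact Finset.pairwise_sort s _
  · exact Finset.pairwise_sort t _

/-- The key quantitative estimate. -/
lemma key (A : J → Mt d) {s t : Finset J} (h : s ⊆ t) :
    ‖oprod A t - oprod A s‖ ≤ Real.exp (2 * ∑ j ∈ t, ‖A j‖) * ∑ j ∈ t \ s, ‖A j‖ := by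
  have hsub := (sort_sublist h).reverse
  have hd := g_diff A hsub
  rw [← oprod_eq_g, ← oprod_eq_g, S_reverse, S_reverse, S_sort, S_sort] at hd
  refine hd.trans ?_
  have heq : ∑ j ∈ t, ‖A j‖ - ∑ j ∈ s, ‖A j‖ = ∑ j ∈ t \ s, ‖A j‖ := by
    rw [← Finset.sum_sdiff h]; ring
  rw [heq]

end Stmt17Aux

end

noncomputable section

/-- If `∑_j ‖A_j‖ < ∞`, the ordered product of the `e^{A_j}` over the totally ordered set `J`
converges; moreover, for finite `J₀ ⊆ J₁`,
`‖∏^←_{J₁} e^{A_j} − ∏^←_{J₀} e^{A_j}‖ ≤ e^{3α} ∑_{j ∈ J₁∖J₀} ‖A_j‖` with `α = ∑_j ‖A_j‖`. -/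
theorem stmt17 {J : Type*} [LinearOrder J] (d : ℕ) (A : J → Mt d)
    (hA : Summable fun j => ‖A j‖) :
    (∃ P : Mt d, ∀ ε : ℝ, 0 < ε → ∃ J₀ : Finset J, ∀ J₁ : Finset J, J₀ ⊆ J₁ →
        ‖P - oprod A J₁‖ ≤ ε) ∧
    ∀ J₀ J₁ : Finset J, J₀ ⊆ J₁ →
      ‖oprod A J₁ - oprod A J₀‖ ≤ Real.exp (3 * ∑' j, ‖A j‖) * ∑ j ∈ J₁ \ J₀, ‖A j‖ := by
  classical
  set α := ∑' j, ‖A j‖ with hα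
  have hα0 : 0 ≤ α := tsum_nonneg fun j => norm_nonneg _
  set C := Real.exp (3 * α) with hC
  have hC0 : 0 < C := Real.exp_pos _
  have key3 : ∀ J₀ J₁ : Finset J, J₀ ⊆ J₁ →
      ‖oprod A J₁ - oprod A J₀‖ ≤ C * ∑ j ∈ J₁ \ J₀, ‖A j‖ := by
    intro J₀ J₁ h
    refine (Stmt17Aux.key A h).trans ?_
    refine mul_le_mul_of_nonneg_right ?_ (Finset.sum_nonneg fun j _ => norm_nonneg _)
    apply Real.exp_le_exp.2
    have hle : ∑ j ∈ J₁, ‖A j‖ ≤ α := Summable.sum_le_tsum J₁ (fun i _ => norm_nonneg _) hA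
    linarith
  refine ⟨?_, key3⟩
  have hcauchy : CauchySeq (fun s : Finset J => oprod A s) := by
    rw [Metric.cauchySeq_iff']
    intro ε hε
    have hε' : 0 < ε / (C + 1) := by positivity
    obtain ⟨s, hs⟩ := summable_iff_vanishing_norm.1 hA (ε / (C + 1)) hε'
    refine ⟨s, fun n hn => ?_⟩
    have hsub : s ⊆ n := hn
    have h1 := key3 s n hsub
    have h2 : ∑ j ∈ n \ s, ‖A j‖ < ε / (C + 1) := by
      have := hs (n \ s) Finset.sdiff_disjoint
      rwa [Real.norm_of_nonneg (Finset.sum_nonneg fun j _ => norm_nonneg _)] at this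
    have h3 : 0 ≤ ∑ j ∈ n \ s, ‖A j‖ := Finset.sum_nonneg fun j _ => norm_nonneg _
    rw [dist_eq_norm]
    calc ‖oprod A n - oprod A s‖ ≤ C * ∑ j ∈ n \ s, ‖A j‖ := h1
      _ ≤ C * (ε / (C + 1)) := mul_le_mul_of_nonneg_left h2.le hC0.le
      _ < ε := by
          rw [mul_comm, div_mul_eq_mul_div, div_lt_iff₀ (by linarith : (0:ℝ) < C + 1)]
          nlinarith
  obtain ⟨P, hP⟩ := cauchySeq_tendsto_of_complete hcauchy
  refine ⟨P, fun ε hε => ?_⟩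
  rw [Metric.tendsto_atTop] at hP
  obtain ⟨N, hN⟩ := hP ε hε
  refine ⟨N, fun J₁ h1 => ?_⟩
  have h2 := hN J₁ (Finset.le_iff_subset.2 h1)
  rw [dist_eq_norm, norm_sub_rev] at h2
  exact h2.le
end
end
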